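/- Let p be a prime and u, v, w ∈ ℚₚ³. Then ‖v‖ₚ · ‖u ∧ w‖ₚ ≤ max(‖w‖ₚ · ‖u ∧ v‖ₚ, ‖u‖ₚ · ‖v ∧ w‖ₚ). -/

import Mathlib

/-- The p-adic sup norm of a vector in `ℚₚ³`. -/
noncomputable def pSup {p : ℕ} [Fact p.Prime] (v : Fin 3 → ℚ_[p]) : ℝ := max (max ‖v 0‖ ‖v 1‖) ‖v 2‖

/-- The cross product on `ℚₚ³`. -/
noncomputable def pCross {p : ℕ} [Fact p.Prime] (v w : Fin 3 → ℚ_[p]) : Fin 3 → ℚ_[p] :=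
  ![v 1 * w 2 - v 2 * w 1, v 2 * w 0 - v 0 * w 2, v 0 * w 1 - v 1 * w 0]

/-!
Expanding in coordinates gives the identity
`v ⊗ (u × w) = u ⊗ (v × w) + w ⊗ (u × v) - [u, v, w] · I`,
where the triple product `[u, v, w] = u ⬝ᵥ (v × w)` is itself a sum of entries of `u ⊗ (v × w)`.
Every entry on the right has norm at most the right-hand side of the inequality, so by the
ultrametric inequality so does every entry `v i * (u × w) j`, and the sup norms follow.
-/

open Matrix

theorem mul_cross_apply_eq {R : Type*} [CommRing R] (u v w : Fin 3 → R) (i j : Fin 3) :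
    v i * (u ⨯₃ w) j =
      u i * (v ⨯₃ w) j + w i * (u ⨯₃ v) j - if i = j then u ⬝ᵥ (v ⨯₃ w) else 0 := by
  fin_cases i <;> fin_cases j <;>
    simp [cross_apply, dotProduct, Fin.sum_univ_three] <;> ring

section PiNorm

variable {ι E : Type*} [Fintype ι] [SeminormedAddGroup E]

theorem mul_pi_norm_le_of_forall {a C : ℝ} {f : ι → E} (ha : 0 ≤ a) (hC : 0 ≤ C)
    (h : ∀ i, a * ‖f i‖ ≤ C) : a * ‖f‖ ≤ C := by
  rcases ha.eq_or_lt with rfl | ha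
  · simpa using hC
  rw [mul_comm, ← le_div_iff₀ ha, pi_norm_le_iff_of_nonneg (div_nonneg hC ha.le)]
  intro i
  rw [le_div_iff₀ ha, mul_comm]
  exact h i

theorem pi_norm_mul_pi_norm_le_of_forall {κ F : Type*} [Fintype κ] [SeminormedAddGroup F]
    {C : ℝ} {f : ι → E} {g : κ → F} (hC : 0 ≤ C) (h : ∀ i j, ‖f i‖ * ‖g j‖ ≤ C) :
    ‖f‖ * ‖g‖ ≤ C := by
  refine mul_pi_norm_le_of_forall (norm_nonneg _) hC fun j => ?_
  rw [mul_comm]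
  exact mul_pi_norm_le_of_forall (norm_nonneg _) hC fun i => (mul_comm _ _).trans_le (h i j)

end PiNorm

theorem IsUltrametricDist.norm_add_sub_le {S : Type*} [SeminormedAddGroup S] [IsUltrametricDist S]
    {x y z : S} {C : ℝ} (hx : ‖x‖ ≤ C) (hy : ‖y‖ ≤ C) (hz : ‖z‖ ≤ C) : ‖x + y - z‖ ≤ C := by
  rw [sub_eq_add_neg]
  refine (norm_add_le_max _ _).trans (max_le ((norm_add_le_max _ _).trans (max_le hx hy)) ?_)
  rwa [norm_neg]

theorem norm_mul_norm_cross_le_max {K : Type*} [NormedField K] [IsUltrametricDist K]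
    (u v w : Fin 3 → K) :
    ‖v‖ * ‖u ⨯₃ w‖ ≤ max (‖w‖ * ‖u ⨯₃ v‖) (‖u‖ * ‖v ⨯₃ w‖) := by
  set M := max (‖w‖ * ‖u ⨯₃ v‖) (‖u‖ * ‖v ⨯₃ w‖)
  have hM : 0 ≤ M := by positivity
  have hu : ∀ i j, ‖u i * (v ⨯₃ w) j‖ ≤ M := fun i j =>
    (norm_mul_le_of_le (norm_le_pi_norm u i) (norm_le_pi_norm _ j)).trans (le_max_right _ _)
  have hw : ∀ i j, ‖w i * (u ⨯₃ v) j‖ ≤ M := fun i j =>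
    (norm_mul_le_of_le (norm_le_pi_norm w i) (norm_le_pi_norm _ j)).trans (le_max_left _ _)
  have htriple : ‖u ⬝ᵥ (v ⨯₃ w)‖ ≤ M :=
    IsUltrametricDist.norm_sum_le_of_forall_le_of_nonneg hM fun k _ => hu k k
  refine pi_norm_mul_pi_norm_le_of_forall hM fun i j => ?_
  rw [← norm_mul, mul_cross_apply_eq]
  refine IsUltrametricDist.norm_add_sub_le (hu i j) (hw i j) ?_
  split_ifs
  · exact htriple
  · simpa using hM

theorem pSup_eq_norm {p : ℕ} [Fact p.Prime] (v : Fin 3 → ℚ_[p]) : pSup v = ‖v‖ := by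
  refine le_antisymm ?_ ?_
  · exact max_le (max_le (norm_le_pi_norm v 0) (norm_le_pi_norm v 1)) (norm_le_pi_norm v 2)
  · refine (pi_norm_le_iff_of_nonneg (by unfold pSup; positivity)).2 fun i => ?_
    fin_cases i <;> simp [pSup]

theorem pCross_eq_cross {p : ℕ} [Fact p.Prime] (v w : Fin 3 → ℚ_[p]) : pCross v w = v ⨯₃ w :=
  rfl

theorem stmt_4 (p : ℕ) [Fact p.Prime] (u v w : Fin 3 → ℚ_[p]) :
    pSup v * pSup (pCross u w) ≤
      max (pSup w * pSup (pCross u v)) (pSup u * pSup (pCross v w)) := by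
  simpa only [pSup_eq_norm, pCross_eq_cross] using norm_mul_norm_cross_le_max u v w
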